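/- arXiv:2105.06570 — 5 statements merged into one kernel-verified Lean document; each statement's English description precedes it below -/
import Mathlib

section
/- Let W be a set, π : W → [0,1] a possibility distribution, and for f : W → [0,1] define N(f) = inf_{w∈W} (π(w) ⇒_G f(w)) and Π(f) = sup_{w∈W} min(π(w), f(w)), where ⇒_G is the Gödel implication. Then for any f, g : W → [0,1], N(λw. f(w) ⇒_G g(w)) ≤ (N(f) ⇒_G N(g)). (Validity of axiom K_□ in possibilistic Gödel models.) -/
open scoped Classical

instance : Fact ((0:ℝ) ≤ 1) := ⟨zero_le_one⟩

/-- Gödel implication on the unit interval. -/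
noncomputable def gimp (x y : unitInterval) : unitInterval := if x ≤ y then 1 else y

/-- Necessity measure induced by a possibility distribution `π`. -/
noncomputable def Nec {W : Type*} (π f : W → unitInterval) : unitInterval :=
  ⨅ w, gimp (π w) (f w)

/-- Possibility measure induced by a possibility distribution `π`. -/
noncomputable def Pos {W : Type*} (π f : W → unitInterval) : unitInterval :=
  ⨆ w, min (π w) (f w)

/-!
The Gödel implication is the Heyting implication of the complete chain `[0,1]`, and `N` is an
infimum of Heyting implications. Axiom K then combines two facts valid in every frame: pointwise,
`p ⇨ f ⇨ g ≤ (p ⇨ f) ⇨ p ⇨ g` (axiom S), and `⨅ i, (a i ⇨ b i) ≤ (⨅ i, a i) ⇨ ⨅ i, b i`.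
-/

theorem gimp_eq_himp (x y : unitInterval) : gimp x y = x ⇨ y := rfl

theorem himp_himp_le_himp_himp_himp {α : Type*} [GeneralizedHeytingAlgebra α] (a b c : α) :
    a ⇨ b ⇨ c ≤ (a ⇨ b) ⇨ a ⇨ c := by
  rw [himp_himp, himp_himp, himp_inf_self, inf_comm]

theorem iInf_himp_le_himp_iInf {α ι : Type*} [Order.Frame α] (a b : ι → α) :
    ⨅ i, (a i ⇨ b i) ≤ (⨅ i, a i) ⇨ ⨅ i, b i :=
  le_himp_iff.2 <| le_iInf fun i => (inf_le_inf (iInf_le _ i) (iInf_le _ i)).trans himp_inf_le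

theorem stmt2_general {W : Type*} (π f g : W → unitInterval) :
    Nec π (fun w => gimp (f w) (g w)) ≤ gimp (Nec π f) (Nec π g) := by
  simp only [Nec, gimp_eq_himp]
  exact (iInf_mono fun w => himp_himp_le_himp_himp_himp _ _ _).trans (iInf_himp_le_himp_iInf _ _)

theorem stmt2 {W : Type*} [Nonempty W] (π f g : W → unitInterval) :
    Nec π (fun w => gimp (f w) (g w)) ≤ gimp (Nec π f) (Nec π g) :=
  stmt2_general π f g
end

section
/- Fischer Servi axiom FS2 is valid in possibilistic Gödel models: for any π : W → [0,1] and any f, g : W → [0,1], (Π(f) ⇒_G N(g)) ≤ N(λw. f(w) ⇒_G g(w)), where ⇒_G is the Gödel implication, N(h) = inf_w (π(w) ⇒_G h(w)) and Π(h) = sup_w min(π(w), h(w)). -/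
open scoped Classical

theorem himp_iInf_himp_le_iInf_himp_himp {α ι : Type*} [Order.Frame α] (π f g : ι → α) :
    (⨆ i, π i ⊓ f i) ⇨ (⨅ i, π i ⇨ g i) ≤ ⨅ i, π i ⇨ f i ⇨ g i :=
  le_iInf fun i => calc
    _ ≤ (π i ⊓ f i) ⇨ (π i ⇨ g i) :=
      himp_le_himp (le_iSup (fun j => π j ⊓ f j) i) (iInf_le (fun j => π j ⇨ g j) i)
    _ = π i ⇨ f i ⇨ g i := by rw [himp_himp, himp_himp, inf_right_comm, inf_idem]

theorem stmt6_general {W : Type*} (π f g : W → unitInterval) :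
    gimp (Pos π f) (Nec π g) ≤ Nec π (fun w => gimp (f w) (g w)) := by
  simp only [Pos, Nec, gimp_eq_himp]
  exact himp_iInf_himp_le_iInf_himp_himp π f g

theorem stmt6 {W : Type*} [Nonempty W] (π f g : W → unitInterval) :
    gimp (Pos π f) (Nec π g) ≤ Nec π (fun w => gimp (f w) (g w)) :=
  stmt6_general π f g
end

section
/- Axiom P is valid in possibilistic Gödel models: for any π : W → [0,1] and f, g : W → [0,1], N(λw. f(w) ⇒_G g(w)) ≤ (Π(f) ⇒_G Π(g)). -/
/-!
If `Π(f) ≤ Π(g)` the right-hand side is `1`. Otherwise some world `w` has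
`min (π w) (f w) > Π(g)`; since `min (π w) (g w) ≤ Π(g) < π w`, also `g w ≤ Π(g)`.
At that world both Gödel implications collapse, `π w ⇒ (f w ⇒ g w) = g w`,
so `N(f ⇒ g) ≤ g w ≤ Π(g) = Π(f) ⇒ Π(g)`.
-/

open scoped Classical

theorem gimp_of_le {x y : unitInterval} (h : x ≤ y) : gimp x y = 1 := if_pos h

theorem gimp_of_lt {x y : unitInterval} (h : y < x) : gimp x y = y := if_neg h.not_ge

section Possibility

variable {W : Type*} (π h : W → unitInterval)

theorem nec_le_gimp (w : W) : Nec π h ≤ gimp (π w) (h w) :=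
  iInf_le (fun w => gimp (π w) (h w)) w

theorem min_le_pos (w : W) : min (π w) (h w) ≤ Pos π h :=
  le_iSup (fun w => min (π w) (h w)) w

variable {π h} in
theorem le_pos_of_pos_lt {w : W} (hw : Pos π h < π w) : h w ≤ Pos π h :=
  (min_le_iff.mp (min_le_pos π h w)).resolve_left hw.not_ge

end Possibility

theorem stmt7_general {W : Type*} (π f g : W → unitInterval) :
    Nec π (fun w => gimp (f w) (g w)) ≤ gimp (Pos π f) (Pos π g) := by
  rcases le_or_gt (Pos π f) (Pos π g) with hfg | hfg
  · rw [gimp_of_le hfg]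
    exact le_top
  rw [gimp_of_lt hfg]
  obtain ⟨w, hw⟩ := lt_iSup_iff.mp hfg
  have hπ : Pos π g < π w := hw.trans_le (min_le_left _ _)
  have hf : Pos π g < f w := hw.trans_le (min_le_right _ _)
  have hg : g w ≤ Pos π g := le_pos_of_pos_lt hπ
  calc Nec π (fun w => gimp (f w) (g w)) ≤ gimp (π w) (gimp (f w) (g w)) := nec_le_gimp π _ w
    _ = g w := by rw [gimp_of_lt (hg.trans_lt hf), gimp_of_lt (hg.trans_lt hπ)]
    _ ≤ Pos π g := hg

theorem stmt7 {W : Type*} [Nonempty W] (π f g : W → unitInterval) :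
    Nec π (fun w => gimp (f w) (g w)) ≤ gimp (Pos π f) (Pos π g) :=
  stmt7_general π f g
end

section
/- In the possibilistic Gödel model with W = ℕ, π(n) = 1 for all n, and e(p, n) = 1/(n+1), the formula □¬¬p → ¬¬□p evaluates to 0 at every world: one has e(□p, n) = inf_m (1 ⇒_G 1/(m+1)) = 0, e(□¬¬p, n) = 1, and hence e(□¬¬p → ¬¬□p, n) = 1 ⇒_G ¬¬0 = 0. -/
open scoped Classical

noncomputable def gneg (x : unitInterval) : unitInterval := gimp x 0

noncomputable def fexample : ℕ → unitInterval := fun n =>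
  ⟨1 / (n + 1), by positivity, by
    rw [div_le_one (by positivity)]
    linarith [Nat.cast_nonneg (α := ℝ) n]⟩

lemma gimp_one_left (y : unitInterval) : gimp 1 y = y := by
  unfold gimp
  split_ifs with h
  · exact le_antisymm h unitInterval.le_one'
  · rfl

lemma gneg_zero : gneg 0 = 1 := if_pos le_rfl

lemma gneg_of_pos {x : unitInterval} (hx : 0 < x) : gneg x = 0 := if_neg hx.not_ge

lemma gneg_one : gneg 1 = 0 := gneg_of_pos zero_lt_one

lemma gneg_gneg_of_pos {x : unitInterval} (hx : 0 < x) : gneg (gneg x) = 1 := by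
  rw [gneg_of_pos hx, gneg_zero]

lemma nec_one_left {W : Type*} (f : W → unitInterval) : Nec (fun _ => 1) f = ⨅ w, f w := by
  simp only [Nec, gimp_one_left]

lemma fexample_pos (n : ℕ) : 0 < fexample n := by
  change (0 : ℝ) < 1 / (n + 1)
  positivity

lemma iInf_fexample : ⨅ n, fexample n = 0 := by
  refine le_antisymm ?_ unitInterval.nonneg'
  change ((⨅ n, fexample n : unitInterval) : ℝ) ≤ 0
  exact ge_of_tendsto' tendsto_one_div_add_atTop_nhds_zero_nat fun n => iInf_le fexample n

theorem stmt12 :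
    Nec (fun _ : ℕ => 1) fexample = 0 ∧
    Nec (fun _ : ℕ => 1) (fun n => gneg (gneg (fexample n))) = 1 ∧
    gimp (Nec (fun _ : ℕ => 1) (fun n => gneg (gneg (fexample n))))
      (gneg (gneg (Nec (fun _ : ℕ => 1) fexample))) = 0 := by
  have nec_p : Nec (fun _ : ℕ => 1) fexample = 0 := by
    rw [nec_one_left, iInf_fexample]
  have nec_nn_p : Nec (fun _ : ℕ => 1) (fun n => gneg (gneg (fexample n))) = 1 := by
    simp only [nec_one_left, gneg_gneg_of_pos (fexample_pos _), iInf_const]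
  refine ⟨nec_p, nec_nn_p, ?_⟩
  rw [nec_p, nec_nn_p, gimp_one_left, gneg_zero, gneg_one]
end

section
/- Theorem T3 is valid in possibilistic Gödel models: for any π : W → [0,1] and f : W → [0,1], Π(λw. ¬¬f(w)) ≤ ¬¬Π(f), where ¬x = x ⇒_G 0. -/
open scoped Classical

lemma gneg_eq (x : unitInterval) : gneg x = if x = 0 then 1 else 0 := by
  simp only [gneg, gimp, unitInterval.nonneg'.ge_iff_eq']

lemma gneg_antitone : Antitone gneg := by
  intro x y hxy
  rw [gneg_eq, gneg_eq]
  split_ifs <;> simp_all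

lemma gneg_gneg_monotone : Monotone (gneg ∘ gneg) :=
  gneg_antitone.comp gneg_antitone

lemma min_gneg_gneg_le (a b : unitInterval) : min a (gneg (gneg b)) ≤ gneg (gneg (min a b)) := by
  simp only [gneg_eq]
  split_ifs <;> simp_all [unitInterval.le_one']

theorem stmt15_general {W : Type*} (π f : W → unitInterval) :
    Pos π (fun w => gneg (gneg (f w))) ≤ gneg (gneg (Pos π f)) :=
  iSup_le fun w =>
    (min_gneg_gneg_le _ _).trans (gneg_gneg_monotone (le_iSup (fun w => min (π w) (f w)) w))

theorem stmt15 {W : Type*} [Nonempty W] (π f : W → unitInterval) :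
    Pos π (fun w => gneg (gneg (f w))) ≤ gneg (gneg (Pos π f)) :=
  stmt15_general π f
end
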